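/- Quantifier-removal lemma for type containment: Suppose α does not appear free in A and all types mentioned are well formed under the typing context Γ1,α,Γ2. (1) If every occurrence of β in A is negative, then Γ1,α,Γ2 ⊢ A[B/β] ⊑ A[(∀α.B)/β]. (2) If every occurrence of β in A is positive, then Γ1,α,Γ2 ⊢ A[(∀α.B)/β] ⊑ A[B/β]. -/

import Mathlib

set_option maxHeartbeats 1000000

namespace SigRes

/-! ## Types of λ_eff^ext -/

/-- Types: type variables, base types, function, universal, product, sum, list. -/
inductive Ty : Type where
  | var  : ℕ → Ty
  | base : ℕ → Ty
  | fn   : Ty → Ty → Ty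
  | all  : ℕ → Ty → Ty
  | prod : Ty → Ty → Ty
  | sum  : Ty → Ty → Ty
  | list : Ty → Ty

/-- Free type variables. -/
def ftv : Ty → Finset ℕ
  | Ty.var a    => {a}
  | Ty.base _   => ∅
  | Ty.fn A B   => ftv A ∪ ftv B
  | Ty.all a A  => ftv A \ {a}
  | Ty.prod A B => ftv A ∪ ftv B
  | Ty.sum A B  => ftv A ∪ ftv B
  | Ty.list A   => ftv A

/-- Simultaneous type substitution by a map (binders shadow). -/
def substMap : (ℕ → Ty) → Ty → Ty
  | σ, Ty.var a    => σ a
  | _, Ty.base i   => Ty.base i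
  | σ, Ty.fn A B   => Ty.fn (substMap σ A) (substMap σ B)
  | σ, Ty.all a A  => Ty.all a (substMap (Function.update σ a (Ty.var a)) A)
  | σ, Ty.prod A B => Ty.prod (substMap σ A) (substMap σ B)
  | σ, Ty.sum A B  => Ty.sum (substMap σ A) (substMap σ B)
  | σ, Ty.list A   => Ty.list (substMap σ A)

/-- `subst1 A b B` is `A[B/b]`. -/
def subst1 (A : Ty) (b : ℕ) (B : Ty) : Ty :=
  substMap (Function.update Ty.var b B) A

def lookupTy : List (ℕ × Ty) → ℕ → Option Ty
  | [], _ => none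
  | (a, B) :: rest, b => if a = b then some B else lookupTy rest b

/-- Simultaneous substitution `A[Bs/as]`. -/
def msubst (A : Ty) (as : List ℕ) (Bs : List Ty) : Ty :=
  substMap (fun b => (lookupTy (as.zip Bs) b).getD (Ty.var b)) A

/-- `∀ a1. … ∀ an. A`. -/
def Ty.alls : List ℕ → Ty → Ty
  | [], A => A
  | a :: as, A => Ty.all a (Ty.alls as A)

/-! ## Polarity of occurrences of a type variable -/

mutual
/-- Every occurrence of `b` in the type is positive. -/
def posOnly (b : ℕ) : Ty → Prop
  | Ty.var _    => True
  | Ty.base _   => True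
  | Ty.fn A B   => negOnly b A ∧ posOnly b B
  | Ty.all a A  => a = b ∨ posOnly b A
  | Ty.prod A B => posOnly b A ∧ posOnly b B
  | Ty.sum A B  => posOnly b A ∧ posOnly b B
  | Ty.list A   => posOnly b A

/-- Every occurrence of `b` in the type is negative. -/
def negOnly (b : ℕ) : Ty → Prop
  | Ty.var a    => a ≠ b
  | Ty.base _   => True
  | Ty.fn A B   => posOnly b A ∧ negOnly b B
  | Ty.all a A  => a = b ∨ negOnly b A
  | Ty.prod A B => negOnly b A ∧ negOnly b B
  | Ty.sum A B  => negOnly b A ∧ negOnly b B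
  | Ty.list A   => negOnly b A
end

/-- Every occurrence of `b` in the type is negative or strictly positive. -/
def negOrSPos (b : ℕ) : Ty → Prop
  | Ty.var _    => True
  | Ty.base _   => True
  | Ty.fn A B   => posOnly b A ∧ negOrSPos b B
  | Ty.all a A  => a = b ∨ negOrSPos b A
  | Ty.prod A B => negOrSPos b A ∧ negOrSPos b B
  | Ty.sum A B  => negOrSPos b A ∧ negOrSPos b B
  | Ty.list A   => negOrSPos b A

/-! ## Typing contexts -/

inductive Binding : Type where
  | tmVar : ℕ → Ty → Binding
  | tyVar : ℕ → Binding

/-- Typing contexts; the most recently added binding is at the head. -/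
abbrev Ctx := List Binding

def tmDom : Ctx → Finset ℕ
  | [] => ∅
  | Binding.tmVar x _ :: Γ => insert x (tmDom Γ)
  | Binding.tyVar _ :: Γ => tmDom Γ

def tyDom : Ctx → Finset ℕ
  | [] => ∅
  | Binding.tmVar _ _ :: Γ => tyDom Γ
  | Binding.tyVar a :: Γ => insert a (tyDom Γ)

def domAll (Γ : Ctx) : Finset ℕ := tmDom Γ ∪ tyDom Γ

/-- Well-formed typing contexts: pairwise-distinct bound (type) variables, and
    all bound types well formed under the preceding bindings. -/
inductive WfCtx : Ctx → Prop where
  | nil : WfCtx []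
  | tm {Γ : Ctx} {x : ℕ} {A : Ty} :
      WfCtx Γ → x ∉ tmDom Γ → ftv A ⊆ tyDom Γ → WfCtx (Binding.tmVar x A :: Γ)
  | ty {Γ : Ctx} {a : ℕ} :
      WfCtx Γ → a ∉ tyDom Γ → WfCtx (Binding.tyVar a :: Γ)

/-- `Γ ⊢ A` : the type `A` is well formed under `Γ`. -/
def WfTy (Γ : Ctx) (A : Ty) : Prop := WfCtx Γ ∧ ftv A ⊆ tyDom Γ

/-- `Γ, a1, …, an` (type-variable extension). -/
def extendTys (Γ : Ctx) (as : List ℕ) : Ctx := (as.map Binding.tyVar).reverse ++ Γ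

/-- A context consisting only of type-variable bindings. -/
def TyVarOnly (Γ : Ctx) : Prop := ∀ b ∈ Γ, ∃ a, b = Binding.tyVar a

/-! ## Type containment -/

inductive TySub : Ctx → Ty → Ty → Prop where
  | refl {Γ A} : WfCtx Γ → ftv A ⊆ tyDom Γ → TySub Γ A A
  | trans {Γ A B C} : TySub Γ A B → TySub Γ B C → TySub Γ A C
  | inst {Γ a A B} : WfCtx Γ → ftv B ⊆ tyDom Γ →
      TySub Γ (Ty.all a A) (subst1 A a B)
  | gen {Γ a A} : a ∉ ftv A → TySub Γ A (Ty.all a A)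
  | poly {Γ a A B} : TySub (Binding.tyVar a :: Γ) A B →
      TySub Γ (Ty.all a A) (Ty.all a B)
  | fn {Γ A1 A2 B1 B2} : TySub Γ B1 A1 → TySub Γ A2 B2 →
      TySub Γ (Ty.fn A1 A2) (Ty.fn B1 B2)
  | prod {Γ A1 A2 B1 B2} : TySub Γ A1 B1 → TySub Γ A2 B2 →
      TySub Γ (Ty.prod A1 A2) (Ty.prod B1 B2)
  | sum {Γ A1 A2 B1 B2} : TySub Γ A1 B1 → TySub Γ A2 B2 →
      TySub Γ (Ty.sum A1 A2) (Ty.sum B1 B2)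
  | list {Γ A B} : TySub Γ A B → TySub Γ (Ty.list A) (Ty.list B)
  | dfun {Γ a A B} : a ∉ ftv A →
      TySub Γ (Ty.all a (Ty.fn A B)) (Ty.fn A (Ty.all a B))
  | dprod {Γ a A B} :
      TySub Γ (Ty.all a (Ty.prod A B)) (Ty.prod (Ty.all a A) (Ty.all a B))
  | dsum {Γ a A B} :
      TySub Γ (Ty.all a (Ty.sum A B)) (Ty.sum (Ty.all a A) (Ty.all a B))
  | dlist {Γ a A} :
      TySub Γ (Ty.all a (Ty.list A)) (Ty.list (Ty.all a A))

/-! ## Operation signatures -/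

/-- `ty(op) = ∀ tvars. dom ↪ cod`, a closed type signature. -/
structure OpSig : Type where
  tvars : List ℕ
  nodup : tvars.Nodup
  dom : Ty
  cod : Ty
  closed_dom : ftv dom ⊆ tvars.toFinset
  closed_cod : ftv cod ⊆ tvars.toFinset

/-- The signature restriction. -/
def OpSig.SR (s : OpSig) : Prop :=
  (∀ a ∈ s.tvars, negOrSPos a s.dom) ∧ (∀ a ∈ s.tvars, posOnly a s.cod)

/-! ## Terms and handlers -/

mutual
inductive Term : Type where
  | var : ℕ → Term
  | const : ℕ → Term
  | lam : ℕ → Term → Term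
  | app : Term → Term → Term
  | op : ℕ → Term → Term
  | handle : Term → Handler → Term
  | pair : Term → Term → Term
  | proj1 : Term → Term
  | proj2 : Term → Term
  | inl : Term → Term
  | inr : Term → Term
  | scase : Term → ℕ → Term → ℕ → Term → Term
  | nil : Term
  | cons : Term → Term
  | lcase : Term → Term → ℕ → Term → Term
  | fix : ℕ → ℕ → Term → Term

inductive Handler : Type where
  | ret : ℕ → Term → Handler
  | opClause : Handler → ℕ → ℕ → ℕ → Term → Handler
end

/-- The return clause of a handler. -/
def Handler.retClause : Handler → ℕ × Term
  | Handler.ret x M => (x, M)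
  | Handler.opClause H _ _ _ _ => H.retClause

/-- The operation clause of a handler for a given operation (if any). -/
def Handler.lookup : Handler → ℕ → Option (ℕ × ℕ × Term)
  | Handler.ret _ _, _ => none
  | Handler.opClause H o' x k M, o => if o' = o then some (x, k, M) else H.lookup o

mutual
/-- Term substitution `M[N/x]` (binders shadow). -/
def Term.subst : Term → ℕ → Term → Term
  | Term.var y, x, N => if y = x then N else Term.var y
  | Term.const c, _, _ => Term.const c
  | Term.lam y M, x, N => if y = x then Term.lam y M else Term.lam y (M.subst x N)
  | Term.app M1 M2, x, N => Term.app (M1.subst x N) (M2.subst x N)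
  | Term.op o M, x, N => Term.op o (M.subst x N)
  | Term.handle M H, x, N => Term.handle (M.subst x N) (H.subst x N)
  | Term.pair M1 M2, x, N => Term.pair (M1.subst x N) (M2.subst x N)
  | Term.proj1 M, x, N => Term.proj1 (M.subst x N)
  | Term.proj2 M, x, N => Term.proj2 (M.subst x N)
  | Term.inl M, x, N => Term.inl (M.subst x N)
  | Term.inr M, x, N => Term.inr (M.subst x N)
  | Term.scase M y M1 z M2, x, N =>
      Term.scase (M.subst x N) y (if y = x then M1 else M1.subst x N)
        z (if z = x then M2 else M2.subst x N)
  | Term.nil, _, _ => Term.nil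
  | Term.cons M, x, N => Term.cons (M.subst x N)
  | Term.lcase M M1 y M2, x, N =>
      Term.lcase (M.subst x N) (M1.subst x N) y (if y = x then M2 else M2.subst x N)
  | Term.fix f y M, x, N =>
      if f = x ∨ y = x then Term.fix f y M else Term.fix f y (M.subst x N)

def Handler.subst : Handler → ℕ → Term → Handler
  | Handler.ret y M, x, N => Handler.ret y (if y = x then M else M.subst x N)
  | Handler.opClause H o y k M, x, N =>
      Handler.opClause (H.subst x N) o y k (if y = x ∨ k = x then M else M.subst x N)
end

/-- Values. -/
inductive IsValue : Term → Prop where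
  | const {c} : IsValue (Term.const c)
  | lam {x M} : IsValue (Term.lam x M)
  | pair {v1 v2} : IsValue v1 → IsValue v2 → IsValue (Term.pair v1 v2)
  | inl {v} : IsValue v → IsValue (Term.inl v)
  | inr {v} : IsValue v → IsValue (Term.inr v)
  | nil : IsValue Term.nil
  | cons {v} : IsValue v → IsValue (Term.cons v)

mutual
/-- Free term variables of a term. -/
def fvTerm : Term → Finset ℕ
  | Term.var x => {x}
  | Term.const _ => ∅
  | Term.lam x M => fvTerm M \ {x}
  | Term.app M1 M2 => fvTerm M1 ∪ fvTerm M2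
  | Term.op _ M => fvTerm M
  | Term.handle M H => fvTerm M ∪ fvHandler H
  | Term.pair M1 M2 => fvTerm M1 ∪ fvTerm M2
  | Term.proj1 M => fvTerm M
  | Term.proj2 M => fvTerm M
  | Term.inl M => fvTerm M
  | Term.inr M => fvTerm M
  | Term.scase M y M1 z M2 => fvTerm M ∪ (fvTerm M1 \ {y}) ∪ (fvTerm M2 \ {z})
  | Term.nil => ∅
  | Term.cons M => fvTerm M
  | Term.lcase M M1 y M2 => fvTerm M ∪ fvTerm M1 ∪ (fvTerm M2 \ {y})
  | Term.fix f y M => fvTerm M \ {f, y}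

def fvHandler : Handler → Finset ℕ
  | Handler.ret x M => fvTerm M \ {x}
  | Handler.opClause H _ x k M => fvHandler H ∪ (fvTerm M \ {x, k})
end

/-! ## Evaluation contexts -/

inductive ECtx : Type where
  | hole : ECtx
  | appL : ECtx → Term → ECtx
  | appR : (v : Term) → IsValue v → ECtx → ECtx
  | op : ℕ → ECtx → ECtx
  | handle : ECtx → Handler → ECtx
  | pairL : ECtx → Term → ECtx
  | pairR : (v : Term) → IsValue v → ECtx → ECtx
  | proj1 : ECtx → ECtx
  | proj2 : ECtx → ECtx
  | inl : ECtx → ECtx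
  | inr : ECtx → ECtx
  | scase : ECtx → ℕ → Term → ℕ → Term → ECtx
  | cons : ECtx → ECtx
  | lcase : ECtx → Term → ℕ → Term → ECtx

/-- `plug E M` is `E[M]`. -/
def plug : ECtx → Term → Term
  | ECtx.hole, M => M
  | ECtx.appL E M2, M => Term.app (plug E M) M2
  | ECtx.appR v _ E, M => Term.app v (plug E M)
  | ECtx.op o E, M => Term.op o (plug E M)
  | ECtx.handle E H, M => Term.handle (plug E M) H
  | ECtx.pairL E M2, M => Term.pair (plug E M) M2
  | ECtx.pairR v _ E, M => Term.pair v (plug E M)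
  | ECtx.proj1 E, M => Term.proj1 (plug E M)
  | ECtx.proj2 E, M => Term.proj2 (plug E M)
  | ECtx.inl E, M => Term.inl (plug E M)
  | ECtx.inr E, M => Term.inr (plug E M)
  | ECtx.scase E y M1 z M2, M => Term.scase (plug E M) y M1 z M2
  | ECtx.cons E, M => Term.cons (plug E M)
  | ECtx.lcase E M1 y M2, M => Term.lcase (plug E M) M1 y M2

/-- `op ∉ E` : the evaluation context is op-free. -/
def opFree (o : ℕ) : ECtx → Prop
  | ECtx.hole => True
  | ECtx.appL E _ => opFree o E
  | ECtx.appR _ _ E => opFree o E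
  | ECtx.op _ E => opFree o E
  | ECtx.handle E H => H.lookup o = none ∧ opFree o E
  | ECtx.pairL E _ => opFree o E
  | ECtx.pairR _ _ E => opFree o E
  | ECtx.proj1 E => opFree o E
  | ECtx.proj2 E => opFree o E
  | ECtx.inl E => opFree o E
  | ECtx.inr E => opFree o E
  | ECtx.scase E _ _ _ _ => opFree o E
  | ECtx.cons E => opFree o E
  | ECtx.lcase E _ _ _ => opFree o E

/-- Free term variables of an evaluation context. -/
def fvECtx : ECtx → Finset ℕ
  | ECtx.hole => ∅
  | ECtx.appL E M => fvECtx E ∪ fvTerm M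
  | ECtx.appR v _ E => fvTerm v ∪ fvECtx E
  | ECtx.op _ E => fvECtx E
  | ECtx.handle E H => fvECtx E ∪ fvHandler H
  | ECtx.pairL E M => fvECtx E ∪ fvTerm M
  | ECtx.pairR v _ E => fvTerm v ∪ fvECtx E
  | ECtx.proj1 E => fvECtx E
  | ECtx.proj2 E => fvECtx E
  | ECtx.inl E => fvECtx E
  | ECtx.inr E => fvECtx E
  | ECtx.scase E y M1 z M2 => fvECtx E ∪ (fvTerm M1 \ {y}) ∪ (fvTerm M2 \ {z})
  | ECtx.cons E => fvECtx E
  | ECtx.lcase E M1 y M2 => fvECtx E ∪ fvTerm M1 ∪ (fvTerm M2 \ {y})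

/-! ## Semantics -/

/-- Reduction `M1 ⤳ M2`, parameterized by the denotation `ζ` of constants. -/
inductive Reduce (zeta : ℕ → ℕ → Option ℕ) : Term → Term → Prop where
  | const {c1 c2 c} : zeta c1 c2 = some c →
      Reduce zeta (Term.app (Term.const c1) (Term.const c2)) (Term.const c)
  | beta {x M v} : IsValue v →
      Reduce zeta (Term.app (Term.lam x M) v) (M.subst x v)
  | ret {v H x M} : IsValue v → H.retClause = (x, M) →
      Reduce zeta (Term.handle v H) (M.subst x v)
  | handle {E o v H x k M y} : IsValue v → opFree o E →
      H.lookup o = some (x, k, M) →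
      y ∉ fvECtx E ∪ fvHandler H →
      Reduce zeta (Term.handle (plug E (Term.op o v)) H)
        ((M.subst x v).subst k (Term.lam y (Term.handle (plug E (Term.var y)) H)))
  | proj1 {v1 v2} : IsValue v1 → IsValue v2 →
      Reduce zeta (Term.proj1 (Term.pair v1 v2)) v1
  | proj2 {v1 v2} : IsValue v1 → IsValue v2 →
      Reduce zeta (Term.proj2 (Term.pair v1 v2)) v2
  | caseL {v y M1 z M2} : IsValue v →
      Reduce zeta (Term.scase (Term.inl v) y M1 z M2) (M1.subst y v)
  | caseR {v y M1 z M2} : IsValue v →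
      Reduce zeta (Term.scase (Term.inr v) y M1 z M2) (M2.subst z v)
  | lnil {M1 y M2} : Reduce zeta (Term.lcase Term.nil M1 y M2) M1
  | lcons {v M1 y M2} : IsValue v →
      Reduce zeta (Term.lcase (Term.cons v) M1 y M2) (M2.subst y v)
  | fix {f x M} :
      Reduce zeta (Term.fix f x M) ((Term.lam x M).subst f (Term.fix f x M))

/-- Evaluation `M1 ⟶ M2`. -/
def Step (zeta : ℕ → ℕ → Option ℕ) (M1 M2 : Term) : Prop :=
  ∃ E M1' M2', M1 = plug E M1' ∧ M2 = plug E M2' ∧ Reduce zeta M1' M2'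

/-- Multi-step evaluation `M1 ⟶* M2`. -/
def Steps (zeta : ℕ → ℕ → Option ℕ) : Term → Term → Prop :=
  Relation.ReflTransGen (Step zeta)

/-! ## Constants -/

/-- First-order types `ι1 → … → ιn → ι(n+1)`. -/
inductive FirstOrder : Ty → Prop where
  | base {i} : FirstOrder (Ty.base i)
  | fn {i A} : FirstOrder A → FirstOrder (Ty.fn (Ty.base i) A)

/-- Standing assumptions on the types of constants and the denotation `ζ`. -/
structure ConstAssum (tyc : ℕ → Ty) (zeta : ℕ → ℕ → Option ℕ) : Prop where
  firstOrder : ∀ c, FirstOrder (tyc c)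
  zeta_defined : ∀ c1 c2, (zeta c1 c2).isSome ↔
      ∃ i A, tyc c1 = Ty.fn (Ty.base i) A ∧ tyc c2 = Ty.base i
  zeta_ty : ∀ c1 c2 c i A, zeta c1 c2 = some c →
      tyc c1 = Ty.fn (Ty.base i) A → tyc c = A

/-! ## The polymorphic type system -/

mutual
inductive Typing (opty : ℕ → OpSig) (tyc : ℕ → Ty) : Ctx → Term → Ty → Prop where
  | var {Γ x A} : WfCtx Γ → Binding.tmVar x A ∈ Γ →
      Typing opty tyc Γ (Term.var x) A
  | const {Γ c} : WfCtx Γ → Typing opty tyc Γ (Term.const c) (tyc c)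
  | abs {Γ x A M B} : Typing opty tyc (Binding.tmVar x A :: Γ) M B →
      Typing opty tyc Γ (Term.lam x M) (Ty.fn A B)
  | app {Γ M1 M2 A B} : Typing opty tyc Γ M1 (Ty.fn A B) →
      Typing opty tyc Γ M2 A → Typing opty tyc Γ (Term.app M1 M2) B
  | gen {Γ a M A} : Typing opty tyc (Binding.tyVar a :: Γ) M A →
      Typing opty tyc Γ M (Ty.all a A)
  | inst {Γ M A B} : Typing opty tyc Γ M A → TySub Γ A B → WfCtx Γ →
      ftv B ⊆ tyDom Γ → Typing opty tyc Γ M B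
  | op {Γ o M Cs} : WfCtx Γ → Cs.length = (opty o).tvars.length →
      (∀ C ∈ Cs, ftv C ⊆ tyDom Γ) →
      Typing opty tyc Γ M (msubst (opty o).dom (opty o).tvars Cs) →
      Typing opty tyc Γ (Term.op o M) (msubst (opty o).cod (opty o).tvars Cs)
  | handle {Γ M H A B} : Typing opty tyc Γ M A → HTyping opty tyc Γ H A B →
      Typing opty tyc Γ (Term.handle M H) B
  | pair {Γ M1 M2 A B} : Typing opty tyc Γ M1 A → Typing opty tyc Γ M2 B →
      Typing opty tyc Γ (Term.pair M1 M2) (Ty.prod A B)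
  | proj1 {Γ M A B} : Typing opty tyc Γ M (Ty.prod A B) →
      Typing opty tyc Γ (Term.proj1 M) A
  | proj2 {Γ M A B} : Typing opty tyc Γ M (Ty.prod A B) →
      Typing opty tyc Γ (Term.proj2 M) B
  | inl {Γ M A B} : Typing opty tyc Γ M A → ftv B ⊆ tyDom Γ →
      Typing opty tyc Γ (Term.inl M) (Ty.sum A B)
  | inr {Γ M A B} : Typing opty tyc Γ M B → ftv A ⊆ tyDom Γ →
      Typing opty tyc Γ (Term.inr M) (Ty.sum A B)
  | scase {Γ M x M1 y M2 A B C} : Typing opty tyc Γ M (Ty.sum A B) →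
      Typing opty tyc (Binding.tmVar x A :: Γ) M1 C →
      Typing opty tyc (Binding.tmVar y B :: Γ) M2 C →
      Typing opty tyc Γ (Term.scase M x M1 y M2) C
  | nil {Γ A} : WfCtx Γ → ftv A ⊆ tyDom Γ →
      Typing opty tyc Γ Term.nil (Ty.list A)
  | cons {Γ M A} : Typing opty tyc Γ M (Ty.prod A (Ty.list A)) →
      Typing opty tyc Γ (Term.cons M) (Ty.list A)
  | lcase {Γ M M1 x M2 A B} : Typing opty tyc Γ M (Ty.list A) →
      Typing opty tyc Γ M1 B →
      Typing opty tyc (Binding.tmVar x (Ty.prod A (Ty.list A)) :: Γ) M2 B →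
      Typing opty tyc Γ (Term.lcase M M1 x M2) B
  | fix {Γ f x M A B} :
      Typing opty tyc (Binding.tmVar x A :: Binding.tmVar f (Ty.fn A B) :: Γ) M B →
      Typing opty tyc Γ (Term.fix f x M) (Ty.fn A B)

inductive HTyping (opty : ℕ → OpSig) (tyc : ℕ → Ty) : Ctx → Handler → Ty → Ty → Prop where
  | ret {Γ x M A B} : Typing opty tyc (Binding.tmVar x A :: Γ) M B →
      HTyping opty tyc Γ (Handler.ret x M) A B
  | op {Γ H o x k M A B} : HTyping opty tyc Γ H A B →
      Typing opty tyc
        (Binding.tmVar k (Ty.fn (opty o).cod B) ::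
          Binding.tmVar x (opty o).dom :: extendTys Γ (opty o).tvars) M B →
      HTyping opty tyc Γ (Handler.opClause H o x k M) A B
end

/-- `unqualify` removes all outermost universal quantifiers. -/
def unqualify : Ty → Ty
  | Ty.all _ A => unqualify A
  | A => A

/-- Substitution in all types bound in a context. -/
def ctxSubst (Γ : Ctx) (a : ℕ) (A : Ty) : Ctx :=
  Γ.map fun b => match b with
    | Binding.tmVar x B => Binding.tmVar x (subst1 B a A)
    | Binding.tyVar c => Binding.tyVar c

/-!
Substitution here is not capture avoiding, so the proof first isolates the syntax: `A[B/β]` and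
`A[(∀α.B)/β]` are related by `ForallElim α` (`∀α` dropped at positive occurrences of `β`, added
at negative ones), which follows from the polarity hypothesis by structural induction. Then
`ForallElim α X Y` gives `X ⊑ Y` by induction on the relation: each dropped quantifier is an
instance of (Inst) at `α`, and the type formers are handled by their congruence rules. The one
obstacle is a binder `∀a` with `a` already bound in the context, where (Poly) cannot be applied
directly; there the bound variable is renamed to a fresh one, so the induction is carried out
up to a renaming `ρ` of free variables that must not be captured by the binders it passes.
-/

def bndv : Ty → Finset ℕ
  | Ty.var _    => ∅
  | Ty.base _   => ∅
  | Ty.fn A B   => bndv A ∪ bndv B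
  | Ty.all a A  => insert a (bndv A)
  | Ty.prod A B => bndv A ∪ bndv B
  | Ty.sum A B  => bndv A ∪ bndv B
  | Ty.list A   => bndv A

lemma substMap_congr (A : Ty) {σ σ' : ℕ → Ty} (h : ∀ x ∈ ftv A, σ x = σ' x) :
    substMap σ A = substMap σ' A := by
  induction A generalizing σ σ' with
  | var x => exact h x (by simp [ftv])
  | base => rfl
  | all a A ih =>
    simp only [substMap]
    congr 1
    refine ih fun x hx => ?_
    by_cases hxa : x = a
    · simp [hxa]
    · simp [Function.update_of_ne hxa, h x (by simp [ftv, hx, hxa])]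
  | list A ih => simp only [substMap]; rw [ih h]
  | _ A B ihA ihB =>
    simp only [substMap]
    rw [ihA fun x hx => h x (by simp [ftv, hx]), ihB fun x hx => h x (by simp [ftv, hx])]

lemma substMap_var (A : Ty) : substMap Ty.var A = A := by
  induction A with
  | var => rfl
  | base => rfl
  | all a A ih => simp [substMap, ih]
  | list A ih => simp [substMap, ih]
  | _ A B ihA ihB => simp [substMap, ihA, ihB]

lemma ftv_substMap_subset (A : Ty) (σ : ℕ → Ty) :
    ftv (substMap σ A) ⊆ (ftv A).biUnion fun x => ftv (σ x) := by
  induction A generalizing σ with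
  | var x => simp [ftv, substMap]
  | base => simp [ftv, substMap]
  | all a A ih =>
    intro v hv
    simp only [substMap, ftv, Finset.mem_sdiff, Finset.mem_singleton] at hv
    obtain ⟨x, hx, hvx⟩ := Finset.mem_biUnion.1 (ih _ hv.1)
    by_cases hxa : x = a
    · simp [hxa, ftv, hv.2] at hvx
    · rw [Function.update_of_ne hxa] at hvx
      exact Finset.mem_biUnion.2 ⟨x, by simp [ftv, hx, hxa], hvx⟩
  | list A ih => exact ih σ
  | _ A B ihA ihB =>
    simp only [substMap, ftv, Finset.union_biUnion]
    exact Finset.union_subset_union (ihA σ) (ihB σ)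

lemma substMap_substMap (A : Ty) {σ τ : ℕ → Ty}
    (h : ∀ d ∈ bndv A, τ d = Ty.var d ∨ ∀ x, x ≠ d → d ∉ ftv (σ x)) :
    substMap τ (substMap σ A) = substMap (fun x => substMap τ (σ x)) A := by
  induction A generalizing σ τ with
  | var => rfl
  | base => rfl
  | all d A ih =>
    simp only [substMap]
    congr 1
    rw [ih fun d' hd' => ?_]
    · refine substMap_congr A fun x _ => ?_
      by_cases hxd : x = d
      · simp [hxd, substMap]
      · rw [Function.update_of_ne hxd, Function.update_of_ne hxd]
        refine substMap_congr _ fun y hy => ?_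
        by_cases hyd : y = d
        · rcases h d (by simp [bndv]) with h1 | h2
          · simp [hyd, h1]
          · exact absurd (hyd ▸ hy) (h2 x hxd)
        · rw [Function.update_of_ne hyd]
    · by_cases hdd : d' = d
      · simp [hdd]
      · rcases h d' (by simp [bndv, hd']) with h1 | h2
        · simp [Function.update_of_ne hdd, h1]
        · refine Or.inr fun x hx => ?_
          by_cases hxd : x = d
          · simp [hxd, ftv, hdd]
          · rw [Function.update_of_ne hxd]; exact h2 x hx
  | list A ih => simp only [substMap]; rw [ih fun d hd => h d (by simpa [bndv] using hd)]
  | _ A B ihA ihB =>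
    simp only [substMap]
    rw [ihA fun d hd => h d (by simp [bndv, hd]), ihB fun d hd => h d (by simp [bndv, hd])]

def rename (ρ : ℕ → ℕ) (A : Ty) : Ty := substMap (Ty.var ∘ ρ) A

lemma rename_id (A : Ty) : rename id A = A := substMap_var A

lemma rename_all (ρ : ℕ → ℕ) (a : ℕ) (A : Ty) :
    rename ρ (Ty.all a A) = Ty.all a (rename (Function.update ρ a a) A) := by
  simp [rename, substMap, Function.comp_update]

lemma ftv_rename_subset {ρ : ℕ → ℕ} {A : Ty} {S : Finset ℕ} (h : ∀ x ∈ ftv A, ρ x ∈ S) :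
    ftv (rename ρ A) ⊆ S := by
  intro v hv
  obtain ⟨x, hx, hvx⟩ := Finset.mem_biUnion.1 (ftv_substMap_subset A _ hv)
  simp only [Function.comp_apply, ftv, Finset.mem_singleton] at hvx
  exact hvx ▸ h x hx

lemma subst1_rename_update {ρ : ℕ → ℕ} {a : ℕ} (hρ : ∀ x, x ≠ a → ρ x ≠ a) (c : ℕ) (A : Ty) :
    subst1 (rename (Function.update ρ a a) A) a (Ty.var c) = rename (Function.update ρ a c) A := by
  unfold subst1 rename
  rw [substMap_substMap A fun d _ => ?_]
  · refine substMap_congr A fun x _ => ?_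
    by_cases hxa : x = a
    · simp [hxa, substMap]
    · simp [Function.update_of_ne hxa, substMap, Function.update_of_ne (hρ x hxa)]
  · by_cases hda : d = a
    · subst hda
      exact Or.inr fun x hx => by simp [ftv, Function.update_of_ne hx, (hρ x hx).symm]
    · simp [Function.update_of_ne hda]

lemma subst1_subst1_var_cancel {A : Ty} {c : ℕ} (hf : c ∉ ftv A) (hb : c ∉ bndv A) (a : ℕ) :
    subst1 (subst1 A a (Ty.var c)) c (Ty.var a) = A := by
  unfold subst1
  rw [substMap_substMap A fun d hd =>
    Or.inl (Function.update_of_ne (ne_of_mem_of_not_mem hd hb) _ _)]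
  conv_rhs => rw [← substMap_var A]
  refine substMap_congr A fun x hx => ?_
  by_cases hxa : x = a
  · simp [hxa, substMap]
  · simp [Function.update_of_ne hxa, substMap, Function.update_of_ne (ne_of_mem_of_not_mem hx hf)]

/-- Alpha-renaming through the context: `∀a.A ⊑ ∀c.∀a.A ⊑ ∀c.∀a.B[c/a] ⊑ ∀a.B`,
where the middle step happens under `Γ, c` although `a` may already be bound in `Γ`. -/
lemma TySub.all_of_rename {Γ : Ctx} {a c : ℕ} {A B : Ty} (hwf : WfCtx Γ) (ha : a ∈ tyDom Γ)
    (hc : c ∉ tyDom Γ) (hcA : c ∉ ftv A) (hcB : c ∉ ftv B) (hcB' : c ∉ bndv B)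
    (h : TySub (Binding.tyVar c :: Γ) (subst1 A a (Ty.var c)) (subst1 B a (Ty.var c))) :
    TySub Γ (Ty.all a A) (Ty.all a B) := by
  have hac : a ≠ c := ne_of_mem_of_not_mem ha hc
  have hwf' : WfCtx (Binding.tyVar c :: Γ) := WfCtx.ty hwf hc
  have hinst : TySub (Binding.tyVar c :: Γ) (Ty.all a A) (subst1 A a (Ty.var c)) :=
    TySub.inst hwf' (by simp [ftv, tyDom])
  have hgen : TySub (Binding.tyVar c :: Γ) (subst1 B a (Ty.var c))
      (Ty.all a (subst1 B a (Ty.var c))) := by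
    refine TySub.gen fun ha' => ?_
    obtain ⟨x, hx, hax⟩ := Finset.mem_biUnion.1 (ftv_substMap_subset B _ ha')
    by_cases hxa : x = a
    · simp [hxa, ftv, hac] at hax
    · simp [Function.update_of_ne hxa, ftv] at hax
      exact hxa hax.symm
  have hback : subst1 (Ty.all a (subst1 B a (Ty.var c))) c (Ty.var a) = Ty.all a B := by
    simp only [subst1, substMap]
    rw [Function.update_comm hac.symm, Function.update_eq_self]
    exact congrArg (Ty.all a) (subst1_subst1_var_cancel hcB hcB' a)
  have hpoly : TySub Γ (Ty.all c (Ty.all a A)) (Ty.all c (Ty.all a (subst1 B a (Ty.var c)))) :=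
    TySub.poly (hinst.trans (h.trans hgen))
  have hinst' : TySub Γ (Ty.all c (Ty.all a (subst1 B a (Ty.var c)))) (Ty.all a B) :=
    hback ▸ TySub.inst hwf (by simp [ftv, ha])
  exact (TySub.gen (by simp [ftv, hcA])).trans (hpoly.trans hinst')

/-- `ForallElim α A B`: `B` arises from `A` by dropping quantifiers `∀α` at positive positions
and adding them at negative ones, so that `A ⊑ B` is expected. -/
inductive ForallElim (α : ℕ) : Ty → Ty → Prop where
  | refl (A : Ty) : ForallElim α A A
  | elim (A : Ty) : ForallElim α (Ty.all α A) A
  | fn {A1 A2 B1 B2 : Ty} : ForallElim α B1 A1 → ForallElim α A2 B2 →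
      ForallElim α (Ty.fn A1 A2) (Ty.fn B1 B2)
  | all (a : ℕ) {A B : Ty} : ForallElim α A B → ForallElim α (Ty.all a A) (Ty.all a B)
  | prod {A1 A2 B1 B2 : Ty} : ForallElim α A1 B1 → ForallElim α A2 B2 →
      ForallElim α (Ty.prod A1 A2) (Ty.prod B1 B2)
  | sum {A1 A2 B1 B2 : Ty} : ForallElim α A1 B1 → ForallElim α A2 B2 →
      ForallElim α (Ty.sum A1 A2) (Ty.sum B1 B2)
  | list {A B : Ty} : ForallElim α A B → ForallElim α (Ty.list A) (Ty.list B)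

lemma forallElim_substMap (α β : ℕ) (A : Ty) {σ σ' : ℕ → Ty} (hne : ∀ x, x ≠ β → σ' x = σ x)
    (hβ : σ' β = Ty.all α (σ β)) :
    (posOnly β A → ForallElim α (substMap σ' A) (substMap σ A)) ∧
      (negOnly β A → ForallElim α (substMap σ A) (substMap σ' A)) := by
  induction A generalizing σ σ' with
  | var x =>
    by_cases hx : x = β
    · subst hx
      simp only [substMap, hβ]
      exact ⟨fun _ => ForallElim.elim _, fun h => absurd rfl h⟩
    · simp only [substMap, hne x hx]
      exact ⟨fun _ => ForallElim.refl _, fun _ => ForallElim.refl _⟩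
  | base => exact ⟨fun _ => ForallElim.refl _, fun _ => ForallElim.refl _⟩
  | fn A B ihA ihB =>
    obtain ⟨hA₁, hA₂⟩ := ihA hne hβ
    obtain ⟨hB₁, hB₂⟩ := ihB hne hβ
    exact ⟨fun h => ForallElim.fn (hA₂ h.1) (hB₁ h.2), fun h => ForallElim.fn (hA₁ h.1) (hB₂ h.2)⟩
  | all a A ih =>
    by_cases hab : a = β
    · have hσ : Function.update σ' a (Ty.var a) = Function.update σ a (Ty.var a) := by
        funext x
        by_cases hxa : x = a
        · simp [hxa]
        · simp [Function.update_of_ne hxa, hne x (hab ▸ hxa)]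
      simp only [substMap, hσ]
      exact ⟨fun _ => ForallElim.refl _, fun _ => ForallElim.refl _⟩
    · obtain ⟨h₁, h₂⟩ := ih (σ := Function.update σ a (Ty.var a))
        (σ' := Function.update σ' a (Ty.var a))
        (fun x hx => by by_cases hxa : x = a <;> simp [hxa, Function.update_of_ne, hne x hx])
        (by simp [Function.update_of_ne (Ne.symm hab), hβ])
      simp only [posOnly, negOnly, hab, false_or, substMap]
      exact ⟨fun h => ForallElim.all a (h₁ h), fun h => ForallElim.all a (h₂ h)⟩
  | prod A B ihA ihB =>
    obtain ⟨hA₁, hA₂⟩ := ihA hne hβ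
    obtain ⟨hB₁, hB₂⟩ := ihB hne hβ
    exact ⟨fun h => ForallElim.prod (hA₁ h.1) (hB₁ h.2),
      fun h => ForallElim.prod (hA₂ h.1) (hB₂ h.2)⟩
  | sum A B ihA ihB =>
    obtain ⟨hA₁, hA₂⟩ := ihA hne hβ
    obtain ⟨hB₁, hB₂⟩ := ihB hne hβ
    exact ⟨fun h => ForallElim.sum (hA₁ h.1) (hB₁ h.2), fun h => ForallElim.sum (hA₂ h.1) (hB₂ h.2)⟩
  | list A ih =>
    obtain ⟨h₁, h₂⟩ := ih hne hβ
    exact ⟨fun h => ForallElim.list (h₁ h), fun h => ForallElim.list (h₂ h)⟩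

structure RenamingFits (α : ℕ) (Γ : Ctx) (ρ : ℕ → ℕ) (A B : Ty) : Prop where
  wf : WfCtx Γ
  mem_α : ρ α ∈ tyDom Γ
  mem_ftv : ∀ x ∈ ftv A ∪ ftv B, ρ x ∈ tyDom Γ
  noCapture : ∀ x, ρ x = x ∨ ρ x ∉ bndv A ∪ bndv B

namespace RenamingFits

variable {α : ℕ} {Γ : Ctx} {ρ : ℕ → ℕ} {A B : Ty}

lemma mono (h : RenamingFits α Γ ρ A B) {A' B' : Ty} (hf : ftv A' ∪ ftv B' ⊆ ftv A ∪ ftv B)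
    (hb : bndv A' ∪ bndv B' ⊆ bndv A ∪ bndv B) : RenamingFits α Γ ρ A' B' where
  wf := h.wf
  mem_α := h.mem_α
  mem_ftv x hx := h.mem_ftv x (hf hx)
  noCapture x := (h.noCapture x).imp_right fun h' h'' => h' (hb h'')

lemma ne_of_mem_bndv (h : RenamingFits α Γ ρ A B) {d : ℕ} (hd : d ∈ bndv A ∪ bndv B) {x : ℕ}
    (hx : x ≠ d) : ρ x ≠ d := by
  rcases h.noCapture x with h' | h'
  · rwa [h']
  · exact fun h'' => h' (h'' ▸ hd)

lemma of_all {a : ℕ} (h : RenamingFits α Γ ρ (Ty.all a A) (Ty.all a B)) {c : ℕ}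
    (hc : c ∉ tyDom Γ) (hcb : c = a ∨ c ∉ bndv A ∪ bndv B) :
    RenamingFits α (Binding.tyVar c :: Γ) (Function.update ρ a c) A B where
  wf := WfCtx.ty h.wf hc
  mem_α := by
    by_cases hαa : α = a
    · simp [hαa, tyDom]
    · simp [Function.update_of_ne hαa, tyDom, h.mem_α]
  mem_ftv x hx := by
    by_cases hxa : x = a
    · simp [hxa, tyDom]
    · have := h.mem_ftv x (by simp only [ftv, Finset.mem_union, Finset.mem_sdiff] at hx ⊢; aesop)
      simp [Function.update_of_ne hxa, tyDom, this]
  noCapture x := by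
    by_cases hxa : x = a
    · subst hxa
      rcases hcb with rfl | hcb
      · simp
      · simp only [Function.update_self]; exact Or.inr hcb
    · rw [Function.update_of_ne hxa]
      exact (h.noCapture x).imp_right fun h' h'' => h' (by simp only [bndv] at h' ⊢; aesop)

end RenamingFits

theorem ForallElim.tySub_rename {α : ℕ} {A B : Ty} (h : ForallElim α A B) {Γ : Ctx}
    {ρ : ℕ → ℕ} (hρ : RenamingFits α Γ ρ A B) : TySub Γ (rename ρ A) (rename ρ B) := by
  induction h generalizing Γ ρ with
  | refl A => exact TySub.refl hρ.wf (ftv_rename_subset fun x hx => hρ.mem_ftv x (by simp [hx]))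
  | elim A =>
    have hinst := TySub.inst (a := α) (A := rename (Function.update ρ α α) A) hρ.wf
      (B := Ty.var (ρ α)) (by simp [ftv, hρ.mem_α])
    rwa [subst1_rename_update (fun x hx => hρ.ne_of_mem_bndv (by simp [bndv]) hx),
      Function.update_eq_self, ← rename_all] at hinst
  | fn _ _ ih₁ ih₂ =>
    refine TySub.fn (ih₁ (hρ.mono ?_ ?_)) (ih₂ (hρ.mono ?_ ?_)) <;> intro x <;>
      simp only [ftv, bndv, Finset.mem_union] <;> tauto
  | @all a A₀ B₀ _ ih =>
    rw [rename_all, rename_all]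
    by_cases ha : a ∈ tyDom Γ
    · have hρa : ∀ x, x ≠ a → ρ x ≠ a := fun x hx => hρ.ne_of_mem_bndv (by simp [bndv]) hx
      obtain ⟨c, hc⟩ := Infinite.exists_notMem_finset (tyDom Γ ∪ bndv A₀ ∪ bndv B₀ ∪
        ftv (rename (Function.update ρ a a) A₀) ∪ ftv (rename (Function.update ρ a a) B₀) ∪
        bndv (rename (Function.update ρ a a) B₀))
      simp only [Finset.mem_union, not_or] at hc
      obtain ⟨⟨⟨⟨⟨hcΓ, hcA⟩, hcB⟩, hcA'⟩, hcB'⟩, hcB''⟩ := hc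
      refine TySub.all_of_rename hρ.wf ha hcΓ hcA' hcB' hcB'' ?_
      rw [subst1_rename_update hρa, subst1_rename_update hρa]
      exact ih (hρ.of_all hcΓ (Or.inr (by simp [hcA, hcB])))
    · exact TySub.poly (ih (hρ.of_all ha (Or.inl rfl)))
  | prod _ _ ih₁ ih₂ =>
    refine TySub.prod (ih₁ (hρ.mono ?_ ?_)) (ih₂ (hρ.mono ?_ ?_)) <;> intro x <;>
      simp only [ftv, bndv, Finset.mem_union] <;> tauto
  | sum _ _ ih₁ ih₂ =>
    refine TySub.sum (ih₁ (hρ.mono ?_ ?_)) (ih₂ (hρ.mono ?_ ?_)) <;> intro x <;>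
      simp only [ftv, bndv, Finset.mem_union] <;> tauto
  | list _ ih => exact TySub.list (ih (hρ.mono (by simp [ftv]) (by simp [bndv])))

theorem ForallElim.tySub {α : ℕ} {A B : Ty} (h : ForallElim α A B) {Γ : Ctx} (hwf : WfCtx Γ)
    (hα : α ∈ tyDom Γ) (hA : ftv A ⊆ tyDom Γ) (hB : ftv B ⊆ tyDom Γ) : TySub Γ A B := by
  have := h.tySub_rename (ρ := id)
    ⟨hwf, hα, fun x hx => Finset.union_subset hA hB hx, fun _ => Or.inl rfl⟩
  rwa [rename_id, rename_id] at this

lemma tyDom_append (Γ Δ : Ctx) : tyDom (Γ ++ Δ) = tyDom Γ ∪ tyDom Δ := by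
  induction Γ with
  | nil => simp [tyDom]
  | cons b Γ ih => cases b <;> simp [tyDom, ih, Finset.insert_union]

lemma ftv_subst1_subset {A B : Ty} {b : ℕ} {S : Finset ℕ} (hA : ftv A ⊆ insert b S)
    (hB : ftv B ⊆ S) : ftv (subst1 A b B) ⊆ S := by
  intro v hv
  obtain ⟨x, hx, hvx⟩ := Finset.mem_biUnion.1 (ftv_substMap_subset A _ hv)
  by_cases hxb : x = b
  · simp only [hxb, Function.update_self] at hvx
    exact hB hvx
  · simp only [Function.update_of_ne hxb, ftv, Finset.mem_singleton] at hvx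
    simpa [hvx, hxb] using hA hx

/-- **Quantifier-removal lemma** for type containment: assume `α ∉ ftv A` and
all types mentioned are well formed under `Γ1, α, Γ2`.
(1) If every occurrence of `β` in `A` is negative, then
`Γ1,α,Γ2 ⊢ A[B/β] ⊑ A[(∀α.B)/β]`.
(2) If every occurrence of `β` in `A` is positive, then
`Γ1,α,Γ2 ⊢ A[(∀α.B)/β] ⊑ A[B/β]`. -/
theorem subtyping_forall_remove
    (Γ1 Γ2 : Ctx) (α β : ℕ) (A B : Ty)
    (hwf : WfCtx (Γ2 ++ Binding.tyVar α :: Γ1))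
    (hA : ftv A ⊆ insert β (tyDom (Γ2 ++ Binding.tyVar α :: Γ1)))
    (hB : ftv B ⊆ tyDom (Γ2 ++ Binding.tyVar α :: Γ1))
    (hα : α ∉ ftv A) :
    (negOnly β A →
        TySub (Γ2 ++ Binding.tyVar α :: Γ1) (subst1 A β B)
          (subst1 A β (Ty.all α B))) ∧
    (posOnly β A →
        TySub (Γ2 ++ Binding.tyVar α :: Γ1) (subst1 A β (Ty.all α B))
          (subst1 A β B)) := by
  have hαΓ : α ∈ tyDom (Γ2 ++ Binding.tyVar α :: Γ1) := by simp [tyDom_append, tyDom]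
  have hB' : ftv (Ty.all α B) ⊆ tyDom (Γ2 ++ Binding.tyVar α :: Γ1) :=
    Finset.sdiff_subset.trans hB
  have hsub := ftv_subst1_subset hA hB
  have hsub' := ftv_subst1_subset hA hB'
  obtain ⟨hpos, hneg⟩ := forallElim_substMap α β A (σ := Function.update Ty.var β B)
    (σ' := Function.update Ty.var β (Ty.all α B)) (fun x hx => by simp [hx]) (by simp)
  exact ⟨fun h => (hneg h).tySub hwf hαΓ hsub hsub', fun h => (hpos h).tySub hwf hαΓ hsub' hsub⟩

end SigRes
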